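/- arXiv:1707.02271 — 2 statements merged into one kernel-verified Lean document; each statement's English description precedes it below -/
import Mathlib

section
/- Let 0 ≤ θ < t ≤ T, let m, n be positive natural numbers, and let Δ^m_{θ,t} = {(s_1,…,s_m) : θ ≤ s_m < … < s_1 ≤ t}. Let S(m,n) denote the set of shuffle permutations σ of {1,…,m+n}, i.e. permutations with σ(1)<…<σ(m) and σ(m+1)<…<σ(m+n). If f : Δ^m_{θ,t} → ℝ and g : Δ^n_{θ,t} → ℝ are Lebesgue integrable, then the product of the integral of f over Δ^m_{θ,t} and the integral of g over Δ^n_{θ,t} equals the sum over σ ∈ S(m,n) of the integral over Δ^{m+n}_{θ,t} of f(s_{σ(1)},…,s_{σ(m)}) g(s_{σ(m+1)},…,s_{σ(m+n)}) ds. -/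
/-!
By Fubini, the product of the two integrals is the integral of
`f (u₁, …, u_m) * g (u_{m+1}, …, u_{m+n})` over `Δ^m × Δ^n ⊆ ℝ^{m+n}`. Off the null set where two
coordinates coincide, a point `v` of `Δ^m × Δ^n` has exactly one decreasing rearrangement
`v ∘ σ⁻¹ ∈ Δ^{m+n}`, and `σ` is a shuffle because it keeps the order inside each block. So
`Δ^m × Δ^n` is, up to a null set, the disjoint union of the cells `{v | v ∘ σ⁻¹ ∈ Δ^{m+n}}` over
`σ ∈ S(m,n)`, and the measure-preserving substitution `v = s ∘ σ` turns the integral over the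
cell of `σ` into the `σ`-term of the sum.
-/

open MeasureTheory

/-- The open simplex `Δ^m_{θ,t} = {s : θ ≤ s_m < … < s_1 ≤ t}`, where index `0`
corresponds to `s_1` (the largest coordinate). -/
def simplex (m : ℕ) (θ t : ℝ) : Set (Fin m → ℝ) :=
  {s | (∀ i, θ ≤ s i ∧ s i ≤ t) ∧ StrictAnti s}

open Function

theorem measurableSet_simplex (m : ℕ) (θ t : ℝ) : MeasurableSet (simplex m θ t) := by
  unfold simplex StrictAnti
  measurability

theorem comp_mem_simplex {k N : ℕ} {θ t : ℝ} {s : Fin N → ℝ} (hs : s ∈ simplex N θ t)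
    {e : Fin k → Fin N} (he : StrictMono e) : s ∘ e ∈ simplex k θ t :=
  ⟨fun i => hs.1 (e i), hs.2.comp_strictMono he⟩

namespace Tuple

variable {N : ℕ} {α : Type*} [LinearOrder α] {v : Fin N → α}

theorem strictAnti_comp_sort_toDual (hv : Injective v) :
    StrictAnti (v ∘ sort (OrderDual.toDual ∘ v)) :=
  (monotone_toDual_comp_iff (f := v ∘ sort (OrderDual.toDual ∘ v)) |>.1
    (monotone_sort _)).strictAnti_of_injective (hv.comp (Equiv.injective _))

theorem eq_sort_toDual_of_strictAnti {σ : Equiv.Perm (Fin N)} (h : StrictAnti (v ∘ σ)) :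
    σ = sort (OrderDual.toDual ∘ v) :=
  eq_sort_iff.2 ⟨monotone_toDual_comp_iff.2 h.antitone,
    fun _ _ hij heq => absurd heq (h hij).ne'⟩

end Tuple

def MeasurableEquiv.piFinAdd (α : Type*) [MeasurableSpace α] (m n : ℕ) :
    (Fin (m + n) → α) ≃ᵐ (Fin m → α) × (Fin n → α) :=
  (MeasurableEquiv.piCongrLeft (fun _ => α) finSumFinEquiv).symm.trans
    (MeasurableEquiv.sumPiEquivProdPi fun _ => α)

theorem MeasurableEquiv.piFinAdd_apply (α : Type*) [MeasurableSpace α] (m n : ℕ)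
    (u : Fin (m + n) → α) :
    piFinAdd α m n u = (u ∘ Fin.castAdd n, u ∘ Fin.natAdd m) := rfl

section Split

variable {α : Type*} [MeasureSpace α] [SigmaFinite (volume : Measure α)] {m n : ℕ}

theorem MeasurableEquiv.volume_preserving_piFinAdd :
    MeasurePreserving (piFinAdd α m n) :=
  (volume_measurePreserving_sumPiEquivProdPi _).comp
    (volume_measurePreserving_piCongrLeft (fun _ => α) finSumFinEquiv).symm

variable {L : Type*} [RCLike L] {f : (Fin m → α) → L} {g : (Fin n → α) → L}

theorem setIntegral_mul_setIntegral_eq_setIntegral_piFinAdd (A : Set (Fin m → α))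
    (B : Set (Fin n → α)) :
    (∫ x in A, f x) * (∫ y in B, g y) =
      ∫ u in MeasurableEquiv.piFinAdd α m n ⁻¹' (A ×ˢ B),
        f (u ∘ Fin.castAdd n) * g (u ∘ Fin.natAdd m) := by
  rw [← setIntegral_prod_mul, ← Measure.volume_eq_prod,
    ← MeasurableEquiv.volume_preserving_piFinAdd.setIntegral_preimage_emb
      (MeasurableEquiv.measurableEmbedding _)]
  rfl

theorem IntegrableOn.mul_piFinAdd {A : Set (Fin m → α)} {B : Set (Fin n → α)}
    (hf : IntegrableOn f A) (hg : IntegrableOn g B) :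
    IntegrableOn (fun u => f (u ∘ Fin.castAdd n) * g (u ∘ Fin.natAdd m))
      (MeasurableEquiv.piFinAdd α m n ⁻¹' (A ×ˢ B)) := by
  refine (MeasurableEquiv.volume_preserving_piFinAdd.integrableOn_comp_preimage
    (MeasurableEquiv.measurableEmbedding _) (f := fun p => f p.1 * g p.2)).2 ?_
  rw [IntegrableOn, Measure.volume_eq_prod, ← Measure.prod_restrict]
  exact hf.mul_prod hg

end Split

section Permutation

variable {α : Type*} [MeasureSpace α] [SigmaFinite (volume : Measure α)]
  {E : Type*} [NormedAddCommGroup E] [NormedSpace ℝ E]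

theorem setIntegral_preimage_comp_perm {ι : Type*} [Fintype ι] (σ : Equiv.Perm ι)
    (s : Set (ι → α)) (F : (ι → α) → E) :
    ∫ v in (· ∘ ⇑σ.symm) ⁻¹' s, F v = ∫ u in s, F (u ∘ σ) := by
  let P := MeasurableEquiv.arrowCongr' σ.symm (MeasurableEquiv.refl α)
  have hP : ⇑P = (· ∘ σ) := rfl
  have hchange := (volume_preserving_arrowCongr' σ.symm (MeasurableEquiv.refl α)
    (MeasurePreserving.id volume)).setIntegral_preimage_emb P.measurableEmbedding F
      ((· ∘ ⇑σ.symm) ⁻¹' s)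
  have hs : (· ∘ ⇑σ) ⁻¹' ((· ∘ ⇑σ.symm) ⁻¹' s) = s := by
    ext u
    simp [comp_assoc]
  rw [← hchange, hP, hs]

end Permutation

theorem volume_setOf_not_injective (ι : Type*) [Fintype ι] :
    volume {v : ι → ℝ | ¬Injective v} = 0 := by
  classical
  have hyperplane : ∀ i j : ι, i ≠ j → volume {v : ι → ℝ | v i = v j} = 0 := fun i j hij => by
    let ℓ : (ι → ℝ) →ₗ[ℝ] ℝ :=
      LinearMap.proj (R := ℝ) (φ := fun _ : ι => ℝ) i - LinearMap.proj j
    have hℓ : LinearMap.ker ℓ ≠ ⊤ := fun h => by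
      simpa [ℓ, hij.symm] using LinearMap.congr_fun (LinearMap.ker_eq_top.1 h) (Pi.single i 1)
    convert Measure.addHaar_submodule volume _ hℓ using 2
    ext v
    simp [ℓ, sub_eq_zero]
  refine measure_mono_null (fun v hv => ?_) (measure_iUnion_null fun i =>
    measure_iUnion_null fun j => measure_iUnion_null (hyperplane i j))
  obtain ⟨i, j, hvij, hij⟩ : ∃ i j, v i = v j ∧ i ≠ j := by simpa [Injective] using hv
  exact Set.mem_iUnion₂.2 ⟨i, j, Set.mem_iUnion.2 ⟨hij, hvij⟩⟩

def shuffles (m n : ℕ) : Finset (Equiv.Perm (Fin (m + n))) :=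
  Finset.univ.filter fun σ =>
    (∀ i j : Fin m, i < j → σ (Fin.castAdd n i) < σ (Fin.castAdd n j)) ∧
    (∀ i j : Fin n, i < j → σ (Fin.natAdd m i) < σ (Fin.natAdd m j))

theorem mem_shuffles {m n : ℕ} {σ : Equiv.Perm (Fin (m + n))} :
    σ ∈ shuffles m n ↔ StrictMono (σ ∘ Fin.castAdd n) ∧ StrictMono (σ ∘ Fin.natAdd m) := by
  simp [shuffles, StrictMono]

def permutedSimplex {N : ℕ} (σ : Equiv.Perm (Fin N)) (θ t : ℝ) : Set (Fin N → ℝ) :=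
  (· ∘ ⇑σ.symm) ⁻¹' simplex N θ t

section Shuffle

variable {m n N : ℕ} {θ t : ℝ}

theorem measurableSet_permutedSimplex (σ : Equiv.Perm (Fin N)) :
    MeasurableSet (permutedSimplex σ θ t) :=
  (measurableSet_simplex N θ t).preimage (by fun_prop)

theorem pairwise_disjoint_permutedSimplex :
    Pairwise (Disjoint on fun σ : Equiv.Perm (Fin N) => permutedSimplex σ θ t) := by
  intro σ τ hστ
  refine Set.disjoint_left.2 fun v hσ hτ => hστ ?_
  exact Equiv.symm_bijective.injective <| (Tuple.eq_sort_toDual_of_strictAnti hσ.2).trans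
    (Tuple.eq_sort_toDual_of_strictAnti hτ.2).symm

theorem permutedSimplex_subset_preimage_piFinAdd {σ : Equiv.Perm (Fin (m + n))}
    (hσ : σ ∈ shuffles m n) :
    permutedSimplex σ θ t ⊆
      MeasurableEquiv.piFinAdd ℝ m n ⁻¹' (simplex m θ t ×ˢ simplex n θ t) := by
  intro v hv
  have comp_mem : ∀ {k} {e : Fin k → Fin (m + n)}, StrictMono (σ ∘ e) → v ∘ e ∈ simplex k θ t :=
    fun he => by simpa [comp_def] using comp_mem_simplex hv he
  exact ⟨comp_mem (mem_shuffles.1 hσ).1, comp_mem (mem_shuffles.1 hσ).2⟩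

theorem exists_shuffle_mem_permutedSimplex {v : Fin (m + n) → ℝ} (hv : Injective v)
    (hvW : v ∈ MeasurableEquiv.piFinAdd ℝ m n ⁻¹' (simplex m θ t ×ˢ simplex n θ t)) :
    ∃ σ ∈ shuffles m n, v ∈ permutedSimplex σ θ t := by
  rw [Set.mem_preimage, MeasurableEquiv.piFinAdd_apply, Set.mem_prod] at hvW
  obtain ⟨⟨hA_bound, hA_anti⟩, ⟨hB_bound, hB_anti⟩⟩ := hvW
  set π := Tuple.sort (OrderDual.toDual ∘ v)
  have hπ : StrictAnti (v ∘ π) := Tuple.strictAnti_comp_sort_toDual hv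
  refine ⟨π.symm, mem_shuffles.2 ⟨fun i j hij => ?_, fun i j hij => ?_⟩, fun i => ?_, ?_⟩
  · exact hπ.lt_iff_gt.1 (by simpa using hA_anti hij)
  · exact hπ.lt_iff_gt.1 (by simpa using hB_anti hij)
  · exact (Fin.forall_fin_add fun k => θ ≤ v k ∧ v k ≤ t).2 ⟨hA_bound, hB_bound⟩ (π i)
  · simpa using hπ

theorem preimage_piFinAdd_ae_eq_biUnion_permutedSimplex :
    MeasurableEquiv.piFinAdd ℝ m n ⁻¹' (simplex m θ t ×ˢ simplex n θ t) =ᵐ[volume]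
      ⋃ σ ∈ shuffles m n, permutedSimplex σ θ t := by
  refine ae_eq_set.2 ⟨measure_mono_null ?_ (volume_setOf_not_injective (Fin (m + n))), ?_⟩
  · rintro v ⟨hvW, hvU⟩ hv
    obtain ⟨σ, hσ, hvσ⟩ := exists_shuffle_mem_permutedSimplex hv hvW
    exact hvU (Set.mem_biUnion hσ hvσ)
  · rw [Set.sdiff_eq_empty.2 <|
      Set.iUnion₂_subset fun σ => permutedSimplex_subset_preimage_piFinAdd, measure_empty]

end Shuffle

theorem integral_simplex_mul_integral_simplex_eq_sum_shuffles_general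
    (θ t : ℝ)
    (m n : ℕ)
    (f : (Fin m → ℝ) → ℝ) (g : (Fin n → ℝ) → ℝ)
    (hf : IntegrableOn f (simplex m θ t))
    (hg : IntegrableOn g (simplex n θ t)) :
    (∫ s in simplex m θ t, f s) * (∫ s in simplex n θ t, g s) =
      ∑ σ ∈ Finset.univ.filter
          (fun σ : Equiv.Perm (Fin (m + n)) =>
            (∀ i j : Fin m, i < j → σ (Fin.castAdd n i) < σ (Fin.castAdd n j)) ∧
            (∀ i j : Fin n, i < j → σ (Fin.natAdd m i) < σ (Fin.natAdd m j))),
        ∫ s in simplex (m + n) θ t,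
          f (fun i => s (σ (Fin.castAdd n i))) * g (fun j => s (σ (Fin.natAdd m j))) := by
  set H : (Fin (m + n) → ℝ) → ℝ := fun u => f (u ∘ Fin.castAdd n) * g (u ∘ Fin.natAdd m)
  calc (∫ s in simplex m θ t, f s) * (∫ s in simplex n θ t, g s)
      = ∫ u in MeasurableEquiv.piFinAdd ℝ m n ⁻¹' (simplex m θ t ×ˢ simplex n θ t), H u :=
        setIntegral_mul_setIntegral_eq_setIntegral_piFinAdd _ _
    _ = ∫ u in ⋃ σ ∈ shuffles m n, permutedSimplex σ θ t, H u :=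
        setIntegral_congr_set preimage_piFinAdd_ae_eq_biUnion_permutedSimplex
    _ = ∑ σ ∈ shuffles m n, ∫ u in permutedSimplex σ θ t, H u :=
        integral_biUnion_finset _ (fun σ _ => measurableSet_permutedSimplex σ)
          (pairwise_disjoint_permutedSimplex.set_pairwise _)
          (fun σ hσ => (IntegrableOn.mul_piFinAdd hf hg).mono_set
            (permutedSimplex_subset_preimage_piFinAdd hσ))
    _ = ∑ σ ∈ shuffles m n, ∫ s in simplex (m + n) θ t, H (s ∘ σ) :=
        Finset.sum_congr rfl fun σ _ => setIntegral_preimage_comp_perm σ _ H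

/-- Shuffle product formula: the product of integrals over the simplices `Δ^m_{θ,t}` and
`Δ^n_{θ,t}` equals the sum over shuffle permutations `σ ∈ S(m,n)` of integrals over
`Δ^{m+n}_{θ,t}`. -/
theorem integral_simplex_mul_integral_simplex_eq_sum_shuffles
    (T θ t : ℝ) (hθ : 0 ≤ θ) (hθt : θ < t) (htT : t ≤ T)
    (m n : ℕ) (hm : 0 < m) (hn : 0 < n)
    (f : (Fin m → ℝ) → ℝ) (g : (Fin n → ℝ) → ℝ)
    (hf : IntegrableOn f (simplex m θ t))
    (hg : IntegrableOn g (simplex n θ t)) :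
    (∫ s in simplex m θ t, f s) * (∫ s in simplex n θ t, g s) =
      ∑ σ ∈ Finset.univ.filter
          (fun σ : Equiv.Perm (Fin (m + n)) =>
            (∀ i j : Fin m, i < j → σ (Fin.castAdd n i) < σ (Fin.castAdd n j)) ∧
            (∀ i j : Fin n, i < j → σ (Fin.natAdd m i) < σ (Fin.natAdd m j))),
        ∫ s in simplex (m + n) θ t,
          f (fun i => s (σ (Fin.castAdd n i))) * g (fun j => s (σ (Fin.natAdd m j))) :=
  integral_simplex_mul_integral_simplex_eq_sum_shuffles_general θ t m n f g hf hg
end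

section
/- Let (Ω, 𝒜, P) be a probability space, X ∈ L²(Ω, 𝒜, P), and ℱ ⊆ 𝒜 a sub-σ-algebra. If for every bounded continuous function φ : ℝ → ℝ one has φ(E[X|ℱ]) = E[φ(X)|ℱ] almost surely, then X is (almost surely equal to an) ℱ-measurable random variable; in fact X = E[X|ℱ] almost surely. -/
open MeasureTheory ProbabilityTheory Real

/-!
A conditional variance vanishes only for a variable that is its own conditional expectation.
Applying the hypothesis to the bounded injective function `arctan` and to `arctan ^ 2` shows that
`arctan X` has zero conditional variance given `ℱ`; hence `arctan X = E[arctan X | ℱ] = arctan E[X | ℱ]`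
almost surely, and injectivity of `arctan` gives `X = E[X | ℱ]`.
-/

lemma abs_arctan_le_pi_div_two (x : ℝ) : |arctan x| ≤ π / 2 :=
  abs_le.mpr ⟨(neg_pi_div_two_lt_arctan x).le, (arctan_lt_pi_div_two x).le⟩

lemma memLp_comp_of_continuous_of_abs_le {Ω : Type*} {mΩ : MeasurableSpace Ω} {μ : Measure Ω}
    [IsFiniteMeasure μ] {φ : ℝ → ℝ} {C : ℝ} {X : Ω → ℝ} (hφ : Continuous φ)
    (hφC : ∀ x, |φ x| ≤ C) (hX : AEStronglyMeasurable X μ) (p : ENNReal) :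
    MemLp (fun ω => φ (X ω)) p μ :=
  MemLp.of_bound (hφ.comp_aestronglyMeasurable hX) C (.of_forall fun ω => hφC (X ω))

lemma ae_eq_condExp_of_condExp_sq_ae_eq_sq_condExp {Ω : Type*} {m m₀ : MeasurableSpace Ω}
    {μ : Measure[m₀] Ω} [IsFiniteMeasure μ] (hm : m ≤ m₀) {X : Ω → ℝ} (hX : MemLp X 2 μ)
    (hsq : μ[X ^ 2 | m] =ᵐ[μ] μ[X | m] ^ 2) :
    X =ᵐ[μ] μ[X | m] := by
  have hvar : Var[X; μ | m] =ᵐ[μ] 0 := by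
    filter_upwards [condVar_ae_eq_condExp_sq_sub_sq_condExp hm hX, hsq] with ω hω hω'
    simp [hω, hω']
  have hint : Integrable ((X - μ[X | m]) ^ 2) μ := (hX.sub (hX.condExp one_le_two)).integrable_sq
  have hzero : ∫ ω, ((X - μ[X | m]) ^ 2) ω ∂μ = 0 := by
    rw [← integral_condExp hm, ← condVar, integral_congr_ae hvar]
    simp
  filter_upwards [(integral_eq_zero_iff_of_nonneg (fun ω => sq_nonneg _) hint).mp hzero]
    with ω hω
  simpa [sub_eq_zero] using hω

/-- If for every bounded continuous `φ : ℝ → ℝ` one has `φ(E[X|ℱ]) = E[φ(X)|ℱ]` a.s.,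
then `X = E[X|ℱ]` a.s.; in particular `X` is a.s. equal to an `ℱ`-measurable
random variable. -/
theorem ae_eq_condexp_of_comp_condexp_eq {Ω : Type*} {mΩ : MeasurableSpace Ω}
    (P : Measure Ω) [IsProbabilityMeasure P]
    (F : MeasurableSpace Ω) (hF : F ≤ mΩ)
    (X : Ω → ℝ) (hX : MemLp X 2 P)
    (h : ∀ φ : ℝ → ℝ, Continuous φ → (∃ C, ∀ x, |φ x| ≤ C) →
      (fun ω => φ ((P[X|F]) ω)) =ᵐ[P] P[(fun ω => φ (X ω))|F]) :
    X =ᵐ[P] P[X|F] := by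
  have harctan : (fun ω => arctan ((P[X|F]) ω)) =ᵐ[P] P[(fun ω => arctan (X ω))|F] :=
    h arctan continuous_arctan ⟨π / 2, abs_arctan_le_pi_div_two⟩
  have harctan_sq :
      (fun ω => arctan ((P[X|F]) ω) ^ 2) =ᵐ[P] P[(fun ω => arctan (X ω) ^ 2)|F] :=
    h (fun x => arctan x ^ 2) (continuous_arctan.pow 2) ⟨(π / 2) ^ 2, fun x => by
      rw [abs_pow]; exact pow_le_pow_left₀ (abs_nonneg _) (abs_arctan_le_pi_div_two x) 2⟩
  have hsq : P[(fun ω => arctan (X ω)) ^ 2|F] =ᵐ[P] P[(fun ω => arctan (X ω))|F] ^ 2 := by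
    filter_upwards [harctan, harctan_sq] with ω h₁ h₂
    simp only [Pi.pow_apply, ← h₁]
    exact h₂.symm
  have hL2 : MemLp (fun ω => arctan (X ω)) 2 P :=
    memLp_comp_of_continuous_of_abs_le continuous_arctan abs_arctan_le_pi_div_two
      hX.aestronglyMeasurable 2
  filter_upwards [ae_eq_condExp_of_condExp_sq_ae_eq_sq_condExp hF hL2 hsq, harctan] with ω h₁ h₂
  exact arctan_injective (h₁.trans h₂.symm)
end
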